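/- arXiv:1612.06501 — 4 statements merged into one kernel-verified Lean document; each statement's English description precedes it below -/
import Mathlib

section
/- Let g : ℝ → ℝ be Bohr almost periodic with inf g > 0 and let u*_g denote the unique bounded positive steady state. Then inf g ≤ u*_g(x) ≤ sup g for all x ∈ ℝ; in particular inf_{x ∈ ℝ} u*_g(x) > 0. -/
/-!
A C² function that is bounded above and strictly convex wherever it is positive is nonpositive:
at a point where it is positive it increases in one direction (after a reflection), so it stays
positive and convex there, and a convex function with positive slope is unbounded.
For the steady state, `m - u*` and `u* - M` are such functions whenever `m ≤ g ≤ M`, since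
`u*'' = u* (u* - g)`. The range of `g` is bounded because `g = u* - u*'' / u*` is continuous and
almost periodic.
-/

/-- A function `f : ℝ → ℝ` is Bohr almost periodic if for every `ε > 0` there is `L > 0`
such that every interval of length `L` contains an `ε`-almost period `s`. -/
def BohrAlmostPeriodic (f : ℝ → ℝ) : Prop :=
  ∀ ε > (0 : ℝ), ∃ L > (0 : ℝ), ∀ t : ℝ, ∃ s ∈ Set.Icc t (t + L),
    ∀ x : ℝ, |f (x + s) - f x| < ε

/-- `u` is a bounded positive C² solution of `u'' + u (g x - u) = 0` on `ℝ`. -/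
def IsBddPosSteadyState (g u : ℝ → ℝ) : Prop :=
  ContDiff ℝ 2 u ∧ (∃ C : ℝ, ∀ x : ℝ, |u x| ≤ C) ∧ (∀ x : ℝ, 0 < u x) ∧
    ∀ x : ℝ, deriv (deriv u) x + u x * (g x - u x) = 0

open Set

theorem BohrAlmostPeriodic.isBounded_range {f : ℝ → ℝ} (hf : BohrAlmostPeriodic f)
    (hc : Continuous f) : Bornology.IsBounded (range f) := by
  obtain ⟨L, -, hL⟩ := hf 1 one_pos
  refine ((isCompact_Icc (a := 0) (b := L)).image hc).isBounded.thickening (δ := 1) |>.subset ?_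
  rintro _ ⟨x, rfl⟩
  obtain ⟨s, ⟨hs₁, hs₂⟩, hs⟩ := hL (x - L)
  refine Metric.mem_thickening_iff.mpr
    ⟨f (x - s), ⟨x - s, ⟨by linarith, by linarith⟩, rfl⟩, ?_⟩
  simpa [Real.dist_eq] using hs (x - s)

section ConvexWherePositive

variable {f : ℝ → ℝ} (hf : Differentiable ℝ f) (hf' : Differentiable ℝ (deriv f))
  (hconv : ∀ x, 0 < f x → 0 < deriv (deriv f) x)
include hf hf' hconv

theorem pos_of_le_of_deriv_nonneg {b : ℝ} (hb : 0 < f b) (hb' : 0 ≤ deriv f b) :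
    ∀ x, b ≤ x → 0 < f x := by
  -- `z` below is the first zero of `f` after `b`; on `[b, z]` `f` is convex with `f' b ≥ 0`,
  -- hence nondecreasing, so `f z ≥ f b > 0`.
  by_contra! hbad
  set bad := {x | b ≤ x ∧ f x ≤ 0}
  have hbdd : BddBelow bad := ⟨b, fun _ hy ↦ hy.1⟩
  have hz : sInf bad ∈ bad :=
    (isClosed_Ici.inter (isClosed_Iic.preimage hf.continuous)).csInf_mem hbad hbdd
  set z := sInf bad
  have hbz : b < z := lt_of_le_of_ne hz.1 fun h ↦ by linarith [h ▸ hz.2]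
  have hpos : ∀ y ∈ Ico b z, 0 < f y := fun y hy ↦
    not_le.mp fun hy' ↦ (csInf_le hbdd ⟨hy.1, hy'⟩).not_gt hy.2
  have hderiv_mono : MonotoneOn (deriv f) (Icc b z) :=
    monotoneOn_of_deriv_nonneg (convex_Icc b z) hf'.continuous.continuousOn hf'.differentiableOn
      fun x hx ↦ by
        rw [interior_Icc] at hx
        exact (hconv x (hpos x ⟨hx.1.le, hx.2⟩)).le
  have hmono : MonotoneOn f (Icc b z) :=
    monotoneOn_of_deriv_nonneg (convex_Icc b z) hf.continuous.continuousOn hf.differentiableOn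
      fun x hx ↦ by
        rw [interior_Icc] at hx
        exact hb'.trans (hderiv_mono (left_mem_Icc.mpr hbz.le) ⟨hx.1.le, hx.2.le⟩ hx.1.le)
  linarith [hmono (left_mem_Icc.mpr hbz.le) (right_mem_Icc.mpr hbz.le) hbz.le, hz.2]

theorem not_bddAbove_range_of_deriv_nonneg {b : ℝ} (hb : 0 < f b) (hb' : 0 ≤ deriv f b) :
    ¬ BddAbove (range f) := by
  have hpos := pos_of_le_of_deriv_nonneg hf hf' hconv hb hb'
  have hderiv_mono : StrictMonoOn (deriv f) (Ici b) :=
    strictMonoOn_of_deriv_pos (convex_Ici b) hf'.continuous.continuousOn fun x hx ↦ by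
      rw [interior_Ici] at hx
      exact hconv x (hpos x (le_of_lt hx))
  set a := deriv f (b + 1)
  have ha : 0 < a := hb'.trans_lt (hderiv_mono (mem_Ici.mpr le_rfl) (by simp) (by linarith))
  have hslope : ∀ x, b + 1 ≤ x → a * (x - (b + 1)) ≤ f x - f (b + 1) := fun x hx ↦
    (convex_Ici (b + 1)).mul_sub_le_image_sub_of_le_deriv hf.continuous.continuousOn
      hf.differentiableOn (fun y hy ↦ by
        rw [interior_Ici, mem_Ioi] at hy
        exact (hderiv_mono (mem_Ici.mpr (by linarith)) (mem_Ici.mpr (by linarith)) hy).le)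
      (b + 1) (mem_Ici.mpr le_rfl) x hx hx
  rintro ⟨C, hC⟩
  have hC' : ∀ x, f x ≤ C := fun x ↦ hC ⟨x, rfl⟩
  have hstep : 0 ≤ (C - f (b + 1) + 1) / a := div_nonneg (by linarith [hC' (b + 1)]) ha.le
  have := hslope (b + 1 + (C - f (b + 1) + 1) / a) (by linarith)
  rw [add_sub_cancel_left, mul_div_cancel₀ _ ha.ne'] at this
  linarith [hC' (b + 1 + (C - f (b + 1) + 1) / a)]

theorem nonpos_of_bddAbove_range_of_deriv_deriv_pos (hbdd : BddAbove (range f)) (x : ℝ) :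
    f x ≤ 0 := by
  by_contra! hx
  rcases le_or_gt 0 (deriv f x) with hx' | hx'
  · exact not_bddAbove_range_of_deriv_nonneg hf hf' hconv hx hx' hbdd
  have hderiv : deriv (fun y ↦ f (-y)) = fun y ↦ -deriv f (-y) :=
    funext fun _ ↦ deriv_comp_neg ..
  refine not_bddAbove_range_of_deriv_nonneg (f := fun y ↦ f (-y)) (b := -x)
    (hf.comp differentiable_neg) (by rw [hderiv]; exact (hf'.comp differentiable_neg).neg)
    (fun y hy ↦ ?_) (by simpa using hx) (by rw [hderiv]; simpa using hx'.le) ?_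
  · rw [hderiv, deriv.fun_neg, deriv_comp_neg, neg_neg]
    exact hconv _ hy
  · exact hbdd.mono (range_comp_subset_range _ f)

end ConvexWherePositive

namespace IsBddPosSteadyState

variable {g u : ℝ → ℝ} (hu : IsBddPosSteadyState g u)
include hu

theorem deriv_deriv_eq (x : ℝ) : deriv (deriv u) x = u x * (u x - g x) := by
  linear_combination hu.2.2.2 x

theorem contDiff_deriv : ContDiff ℝ 1 (deriv u) :=
  (contDiff_succ_iff_deriv (n := 1).mp hu.1).2.2

theorem continuous_coeff : Continuous g := by
  have hg : g = fun x ↦ u x - deriv (deriv u) x / u x := funext fun x ↦ by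
    field_simp [(hu.2.2.1 x).ne']
    linear_combination hu.2.2.2 x
  rw [hg]
  exact hu.1.continuous.sub ((hu.contDiff_deriv.continuous_deriv le_rfl).div hu.1.continuous
    fun x ↦ (hu.2.2.1 x).ne')

theorem le_of_forall_le {m : ℝ} (hm : ∀ x, m ≤ g x) (x : ℝ) : m ≤ u x := by
  have h := nonpos_of_bddAbove_range_of_deriv_deriv_pos (f := (m - u ·))
    ((hu.1.differentiable two_ne_zero).const_sub m)
    (by rw [deriv_const_sub']; exact (hu.contDiff_deriv.differentiable one_ne_zero).neg)
    (fun y hy ↦ ?_) ⟨m, ?_⟩ x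
  · linarith
  · rw [deriv_const_sub', deriv.fun_neg, hu.deriv_deriv_eq]
    nlinarith [hu.2.2.1 y, hm y]
  · rintro _ ⟨y, rfl⟩
    linarith [hu.2.2.1 y]

theorem le_of_forall_ge {M : ℝ} (hM : ∀ x, g x ≤ M) (x : ℝ) : u x ≤ M := by
  obtain ⟨C, hC⟩ := hu.2.1
  have h := nonpos_of_bddAbove_range_of_deriv_deriv_pos (f := (u · - M))
    ((hu.1.differentiable two_ne_zero).sub_const M)
    (by rw [deriv_sub_const_fun]; exact hu.contDiff_deriv.differentiable one_ne_zero)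
    (fun y hy ↦ ?_) ⟨C - M, ?_⟩ x
  · linarith
  · rw [deriv_sub_const_fun, hu.deriv_deriv_eq]
    nlinarith [hu.2.2.1 y, hM y]
  · rintro _ ⟨y, rfl⟩
    linarith [le_abs_self (u y), hC y]

end IsBddPosSteadyState

theorem steady_state_bounds (g ustar : ℝ → ℝ) (hg : BohrAlmostPeriodic g)
    (hginf : ∃ m > (0 : ℝ), ∀ x : ℝ, m ≤ g x)
    (hstar : IsBddPosSteadyState g ustar) :
    (∀ x : ℝ, sInf (Set.range g) ≤ ustar x ∧ ustar x ≤ sSup (Set.range g)) ∧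
      0 < sInf (Set.range ustar) := by
  obtain ⟨m, hm, hmg⟩ := hginf
  have hbdd := hg.isBounded_range hstar.continuous_coeff
  have hlow : ∀ x, sInf (range g) ≤ ustar x :=
    hstar.le_of_forall_le fun x ↦ csInf_le hbdd.bddBelow ⟨x, rfl⟩
  have hhigh : ∀ x, ustar x ≤ sSup (range g) :=
    hstar.le_of_forall_ge fun x ↦ le_csSup hbdd.bddAbove ⟨x, rfl⟩
  have hm_le : m ≤ sInf (range g) := le_csInf (range_nonempty g) (by simpa using hmg)
  refine ⟨fun x ↦ ⟨hlow x, hhigh x⟩, hm.trans_le (hm_le.trans ?_)⟩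
  exact le_csInf (range_nonempty ustar) (by simpa using hlow)
end

section
/- Let g : ℝ → ℝ be Bohr almost periodic with inf g > 0 and let u*_g denote the unique bounded positive steady state. Then u*_g is itself Bohr almost periodic: for every ε > 0 there exists L > 0 such that every interval of length L contains s with sup_{x ∈ ℝ} |u*_g(x + s) − u*_g(x)| < ε. -/
open Set

lemma IsClosed.notMem_of_le_of_forall_Ico {s : Set ℝ} (hs : IsClosed s) {a : ℝ} (ha : a ∉ s)
    (h : ∀ T, a < T → (∀ y ∈ Ico a T, y ∉ s) → T ∉ s) {x : ℝ} (hx : a ≤ x) : x ∉ s := by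
  intro hxs
  have hne : (s ∩ Ici a).Nonempty := ⟨x, hxs, hx⟩
  have hbdd : BddBelow (s ∩ Ici a) := ⟨a, fun _ hy => hy.2⟩
  obtain ⟨hTs, haT⟩ := (hs.inter isClosed_Ici).csInf_mem hne hbdd
  refine h _ (lt_of_le_of_ne haT fun hT => ha (hT ▸ hTs)) (fun y hy hys => ?_) hTs
  exact not_le.mpr hy.2 (csInf_le hbdd ⟨hys, hy.1⟩)

lemma not_bddAbove_image_Ici_of_le_deriv {f : ℝ → ℝ} (hf : Differentiable ℝ f) {a c : ℝ}
    (hc : 0 < c) (hf' : ∀ x ∈ Ici a, c ≤ deriv f x) : ¬BddAbove (f '' Ici a) := by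
  rintro ⟨B, hB⟩
  set y := a + (|B - f a| + 1) / c
  have hay : a ≤ y := le_add_of_nonneg_right (by positivity)
  have hgrowth := (convex_Ici a).mul_sub_le_image_sub_of_le_deriv hf.continuous.continuousOn
    hf.differentiableOn (fun x hx => hf' x (interior_subset hx)) a self_mem_Ici y hay hay
  have hcy : c * (y - a) = |B - f a| + 1 := by simp only [y]; field_simp; ring
  linarith [hB ⟨y, hay, rfl⟩, le_abs_self (B - f a)]

lemma deriv_deriv_comp_neg (f : ℝ → ℝ) (x : ℝ) :
    deriv (deriv fun y => f (-y)) x = deriv (deriv f) (-x) := by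
  simp only [funext (deriv_comp_neg f), deriv.fun_neg, deriv_comp_neg, neg_neg]

lemma deriv_deriv_comp_add_const (f : ℝ → ℝ) (s x : ℝ) :
    deriv (deriv fun y => f (y + s)) x = deriv (deriv f) (x + s) := by
  simp only [funext (deriv_comp_add_const f s), deriv_comp_add_const]

def IsSteadyState (g u : ℝ → ℝ) : Prop :=
  ContDiff ℝ 2 u ∧ ∀ x, deriv (deriv u) x + u x * (g x - u x) = 0

noncomputable def wronskian (u v : ℝ → ℝ) (x : ℝ) : ℝ := u x * deriv v x - v x * deriv u x

lemma hasDerivAt_div_wronskian {u v : ℝ → ℝ} {x : ℝ} (hu : DifferentiableAt ℝ u x)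
    (hv : DifferentiableAt ℝ v x) (hx : u x ≠ 0) :
    HasDerivAt (fun y => v y / u y) (wronskian u v x / u x ^ 2) x :=
  (hv.hasDerivAt.fun_div hu.hasDerivAt hx).congr_deriv (by simp only [wronskian]; ring)

namespace IsSteadyState

variable {g g₁ g₂ u v : ℝ → ℝ} {m C ε : ℝ}

lemma deriv_deriv_eq (h : IsSteadyState g u) (x : ℝ) :
    deriv (deriv u) x = u x * (u x - g x) := by
  linarith [h.2 x]

lemma differentiable (h : IsSteadyState g u) : Differentiable ℝ u :=
  h.1.differentiable two_ne_zero

lemma differentiable_deriv (h : IsSteadyState g u) : Differentiable ℝ (deriv u) :=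
  h.1.differentiable_deriv_two

lemma comp_neg (h : IsSteadyState g u) : IsSteadyState (fun x => g (-x)) (fun x => u (-x)) :=
  ⟨h.1.comp contDiff_neg, fun x => by rw [deriv_deriv_comp_neg]; exact h.2 (-x)⟩

lemma comp_add_const (h : IsSteadyState g u) (s : ℝ) :
    IsSteadyState (fun x => g (x + s)) (fun x => u (x + s)) :=
  ⟨h.1.comp (contDiff_id.add contDiff_const), fun x => by
    rw [deriv_deriv_comp_add_const]; exact h.2 (x + s)⟩

lemma deriv_deriv_neg (h : IsSteadyState g u) {x : ℝ} (hpos : 0 < u x) (hgm : m ≤ g x)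
    (hlt : u x < m) : deriv (deriv u) x < 0 := by
  rw [h.deriv_deriv_eq]
  exact mul_neg_of_pos_of_neg hpos (by linarith)

lemma lt_of_lt_of_deriv_nonpos (h : IsSteadyState g u) (hpos : ∀ x, 0 < u x)
    (hgm : ∀ x, m ≤ g x) {x₀ : ℝ} (hlt : u x₀ < m) (hslope : deriv u x₀ ≤ 0) {x : ℝ}
    (hx : x₀ ≤ x) : u x < m := by
  have hclosed : IsClosed {x | m ≤ u x} :=
    isClosed_le continuous_const h.differentiable.continuous
  suffices hexit : ∀ T, x₀ < T → (∀ y ∈ Ico x₀ T, y ∉ {x | m ≤ u x}) → T ∉ {x | m ≤ u x} by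
    simpa using hclosed.notMem_of_le_of_forall_Ico (by simpa using hlt) hexit hx
  intro T hT hIco
  have hslope_anti : AntitoneOn (deriv u) (Icc x₀ T) :=
    antitoneOn_of_deriv_nonpos (convex_Icc _ _) h.differentiable_deriv.continuous.continuousOn
      h.differentiable_deriv.differentiableOn fun y hy => by
        rw [interior_Icc] at hy
        exact (h.deriv_deriv_neg (hpos y) (hgm y) (by simpa using hIco y ⟨hy.1.le, hy.2⟩)).le
  have hu_anti : AntitoneOn u (Icc x₀ T) :=
    antitoneOn_of_deriv_nonpos (convex_Icc _ _) h.differentiable.continuous.continuousOn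
      h.differentiable.differentiableOn fun y hy =>
        (hslope_anti (left_mem_Icc.mpr hT.le) (interior_subset hy) (interior_subset hy).1).trans
          hslope
  simpa using (hu_anti (left_mem_Icc.mpr hT.le) (right_mem_Icc.mpr hT.le) hT.le).trans_lt hlt

lemma false_of_lt_of_deriv_nonpos (h : IsSteadyState g u) (hpos : ∀ x, 0 < u x)
    (hgm : ∀ x, m ≤ g x) {x₀ : ℝ} (hlt : u x₀ < m) (hslope : deriv u x₀ ≤ 0) : False := by
  have hslope_anti : StrictAntiOn (deriv u) (Ici x₀) :=
    strictAntiOn_of_deriv_neg (convex_Ici _) h.differentiable_deriv.continuous.continuousOn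
      fun y hy => h.deriv_deriv_neg (hpos y) (hgm y)
        (h.lt_of_lt_of_deriv_nonpos hpos hgm hlt hslope (interior_subset hy))
  have hδ : deriv u (x₀ + 1) < 0 :=
    (hslope_anti self_mem_Ici (by simp) (by linarith)).trans_le hslope
  refine not_bddAbove_image_Ici_of_le_deriv h.differentiable.neg (a := x₀ + 1)
    (neg_pos.mpr hδ) (fun x hx => ?_) ⟨0, ?_⟩
  · rw [deriv.neg]
    exact neg_le_neg (hslope_anti.antitoneOn (by simp) (by simp at hx ⊢; linarith) hx)
  · rintro _ ⟨x, -, rfl⟩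
    exact (neg_neg_of_pos (hpos x)).le

lemma le_of_forall_le (h : IsSteadyState g u) (hpos : ∀ x, 0 < u x) (hgm : ∀ x, m ≤ g x)
    (x : ℝ) : m ≤ u x := by
  by_contra! hlt
  rcases le_or_gt (deriv u x) 0 with hslope | hslope
  · exact h.false_of_lt_of_deriv_nonpos hpos hgm hlt hslope
  · refine h.comp_neg.false_of_lt_of_deriv_nonpos (fun y => hpos (-y)) (fun y => hgm (-y))
      (x₀ := -x) (by simpa using hlt) ?_
    rw [deriv_comp_neg, neg_neg]
    linarith

lemma hasDerivAt_wronskian (hu : IsSteadyState g₁ u) (hv : IsSteadyState g₂ v) (x : ℝ) :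
    HasDerivAt (wronskian u v) (u x * v x * ((v x - u x) - (g₂ x - g₁ x))) x := by
  have hprod := ((hu.differentiable x).hasDerivAt.mul (hv.differentiable_deriv x).hasDerivAt).sub
    ((hv.differentiable x).hasDerivAt.mul (hu.differentiable_deriv x).hasDerivAt)
  refine hprod.congr_deriv ?_
  rw [hu.deriv_deriv_eq, hv.deriv_deriv_eq]
  ring

lemma le_deriv_wronskian (hu : IsSteadyState g₁ u) (hv : IsSteadyState g₂ v) (hm : 0 < m)
    (hε : 0 < ε) {x : ℝ} (hul : m ≤ u x) (hvl : m ≤ v x) (hg : |g₂ x - g₁ x| < ε)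
    (hratio : 1 + 2 * ε / m ≤ v x / u x) : m ^ 2 * ε ≤ deriv (wronskian u v) x := by
  have hupos : 0 < u x := hm.trans_le hul
  rw [(hu.hasDerivAt_wronskian hv x).deriv]
  have hgap : 2 * ε ≤ v x - u x := by
    have hru : (1 + 2 * ε / m) * u x ≤ v x := (le_div_iff₀ hupos).mp hratio
    have h2ε : 2 * ε ≤ 2 * ε / m * u x := by
      rw [div_mul_eq_mul_div, le_div_iff₀ hm]
      nlinarith
    linarith
  have hε_le : ε ≤ (v x - u x) - (g₂ x - g₁ x) := by
    linarith [le_abs_self (g₂ x - g₁ x)]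
  calc m ^ 2 * ε = m * m * ε := by ring
    _ ≤ u x * v x * ((v x - u x) - (g₂ x - g₁ x)) :=
      mul_le_mul (mul_le_mul hul hvl hm.le hupos.le) hε_le hε.le
        (mul_nonneg hupos.le (hm.le.trans hvl))

lemma lt_div_of_wronskian_nonneg (hu : IsSteadyState g₁ u) (hv : IsSteadyState g₂ v)
    (hm : 0 < m) (hε : 0 < ε) (hul : ∀ x, m ≤ u x) (hvl : ∀ x, m ≤ v x)
    (hg : ∀ x, |g₂ x - g₁ x| < ε) {x₀ : ℝ} (hratio : 1 + 2 * ε / m < v x₀ / u x₀)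
    (hW : 0 ≤ wronskian u v x₀) {x : ℝ} (hx : x₀ ≤ x) : 1 + 2 * ε / m < v x / u x := by
  set q := fun x => v x / u x
  have hq : ∀ x, HasDerivAt q (wronskian u v x / u x ^ 2) x := fun x =>
    hasDerivAt_div_wronskian (hu.differentiable x) (hv.differentiable x)
      (hm.trans_le (hul x)).ne'
  have hqdiff : Differentiable ℝ q := fun x => (hq x).differentiableAt
  have hWdiff : Differentiable ℝ (wronskian u v) := fun x =>
    (hu.hasDerivAt_wronskian hv x).differentiableAt
  have hclosed : IsClosed {x | q x ≤ 1 + 2 * ε / m} :=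
    isClosed_le hqdiff.continuous continuous_const
  suffices hexit : ∀ T, x₀ < T → (∀ y ∈ Ico x₀ T, y ∉ {x | q x ≤ 1 + 2 * ε / m}) →
      T ∉ {x | q x ≤ 1 + 2 * ε / m} by
    simpa using hclosed.notMem_of_le_of_forall_Ico (by simpa using hratio) hexit hx
  intro T hT hIco
  have hWmono : MonotoneOn (wronskian u v) (Icc x₀ T) :=
    monotoneOn_of_deriv_nonneg (convex_Icc _ _) hWdiff.continuous.continuousOn
      hWdiff.differentiableOn fun y hy => by
        rw [interior_Icc] at hy
        exact (by positivity : 0 ≤ m ^ 2 * ε).trans (hu.le_deriv_wronskian hv hm hε (hul y)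
          (hvl y) (hg y) (le_of_lt (by simpa using hIco y ⟨hy.1.le, hy.2⟩)))
  have hqmono : MonotoneOn q (Icc x₀ T) :=
    monotoneOn_of_deriv_nonneg (convex_Icc _ _) hqdiff.continuous.continuousOn
      hqdiff.differentiableOn fun y hy => by
        rw [(hq y).deriv]
        exact div_nonneg (hW.trans (hWmono (left_mem_Icc.mpr hT.le) (interior_subset hy)
          (interior_subset hy).1)) (sq_nonneg _)
  simpa using hratio.trans_le (hqmono (left_mem_Icc.mpr hT.le) (right_mem_Icc.mpr hT.le) hT.le)

lemma false_of_lt_div_of_wronskian_nonneg (hu : IsSteadyState g₁ u) (hv : IsSteadyState g₂ v)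
    (hm : 0 < m) (hε : 0 < ε) (hul : ∀ x, m ≤ u x) (hvl : ∀ x, m ≤ v x) (huC : ∀ x, u x ≤ C)
    (hvC : ∀ x, v x ≤ C) (hg : ∀ x, |g₂ x - g₁ x| < ε) {x₀ : ℝ}
    (hratio : 1 + 2 * ε / m < v x₀ / u x₀) (hW : 0 ≤ wronskian u v x₀) : False := by
  have hupos : ∀ x, 0 < u x := fun x => hm.trans_le (hul x)
  have hC : 0 < C := (hupos 0).trans_le (huC 0)
  have hq : ∀ x, HasDerivAt (fun x => v x / u x) (wronskian u v x / u x ^ 2) x := fun x =>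
    hasDerivAt_div_wronskian (hu.differentiable x) (hv.differentiable x) (hupos x).ne'
  have hWdiff : Differentiable ℝ (wronskian u v) := fun x =>
    (hu.hasDerivAt_wronskian hv x).differentiableAt
  have hW_ge : ∀ x ∈ Ici (x₀ + 1), m ^ 2 * ε ≤ wronskian u v x := by
    intro x hx
    rw [mem_Ici] at hx
    have hgrowth := (convex_Ici x₀).mul_sub_le_image_sub_of_le_deriv
      hWdiff.continuous.continuousOn hWdiff.differentiableOn
      (fun y hy => hu.le_deriv_wronskian hv hm hε (hul y) (hvl y) (hg y)
        (hu.lt_div_of_wronskian_nonneg hv hm hε hul hvl hg hratio hW (interior_subset hy)).le)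
      x₀ self_mem_Ici x (by rw [mem_Ici]; linarith) (by linarith)
    have hstep : m ^ 2 * ε ≤ m ^ 2 * ε * (x - x₀) :=
      le_mul_of_one_le_right (by positivity) (by linarith)
    linarith
  refine not_bddAbove_image_Ici_of_le_deriv (fun x => (hq x).differentiableAt) (a := x₀ + 1)
    (c := m ^ 2 * ε / C ^ 2) (by positivity) (fun x hx => ?_) ⟨C / m, ?_⟩
  · rw [(hq x).deriv]
    exact div_le_div₀ ((by positivity : 0 ≤ m ^ 2 * ε).trans (hW_ge x hx)) (hW_ge x hx)
      (pow_pos (hupos x) 2) (pow_le_pow_left₀ (hupos x).le (huC x) 2)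
  · rintro _ ⟨x, -, rfl⟩
    exact div_le_div₀ hC.le (hvC x) hm (hul x)

lemma sub_le (hu : IsSteadyState g₁ u) (hv : IsSteadyState g₂ v) (hm : 0 < m) (hε : 0 < ε)
    (hul : ∀ x, m ≤ u x) (hvl : ∀ x, m ≤ v x) (huC : ∀ x, u x ≤ C) (hvC : ∀ x, v x ≤ C)
    (hg : ∀ x, |g₂ x - g₁ x| < ε) (x : ℝ) : v x - u x ≤ 2 * C * ε / m := by
  have hupos : 0 < u x := hm.trans_le (hul x)
  have hratio : v x / u x ≤ 1 + 2 * ε / m := by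
    by_contra! hgt
    rcases le_or_gt 0 (wronskian u v x) with hW | hW
    · exact hu.false_of_lt_div_of_wronskian_nonneg hv hm hε hul hvl huC hvC hg hgt hW
    · refine hu.comp_neg.false_of_lt_div_of_wronskian_nonneg hv.comp_neg hm hε
        (fun y => hul (-y)) (fun y => hvl (-y)) (fun y => huC (-y)) (fun y => hvC (-y))
        (fun y => hg (-y)) (x₀ := -x) (by simpa using hgt) ?_
      simp only [wronskian, deriv_comp_neg, neg_neg] at hW ⊢
      linarith
  have hvu : v x ≤ (1 + 2 * ε / m) * u x := (div_le_iff₀ hupos).mp hratio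
  have hgap : 2 * ε / m * u x ≤ 2 * ε / m * C := mul_le_mul_of_nonneg_left (huC x) (by positivity)
  calc v x - u x ≤ 2 * ε / m * C := by linarith
    _ = 2 * C * ε / m := by ring

lemma abs_sub_le (hu : IsSteadyState g₁ u) (hv : IsSteadyState g₂ v) (hm : 0 < m) (hε : 0 < ε)
    (hul : ∀ x, m ≤ u x) (hvl : ∀ x, m ≤ v x) (huC : ∀ x, u x ≤ C) (hvC : ∀ x, v x ≤ C)
    (hg : ∀ x, |g₂ x - g₁ x| < ε) (x : ℝ) : |v x - u x| ≤ 2 * C * ε / m :=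
  abs_sub_le_iff.mpr ⟨hu.sub_le hv hm hε hul hvl huC hvC hg x,
    hv.sub_le hu hm hε hvl hul hvC huC (fun y => abs_sub_comm (g₁ y) (g₂ y) ▸ hg y) x⟩

end IsSteadyState

theorem steady_state_almost_periodic (g ustar : ℝ → ℝ) (hg : BohrAlmostPeriodic g)
    (hginf : ∃ m > (0 : ℝ), ∀ x : ℝ, m ≤ g x)
    (hstar : IsBddPosSteadyState g ustar) :
    BohrAlmostPeriodic ustar := by
  obtain ⟨hsmooth, ⟨C, hC⟩, hpos, hode⟩ := hstar
  obtain ⟨m, hm, hgm⟩ := hginf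
  have hu : IsSteadyState g ustar := ⟨hsmooth, hode⟩
  have hul : ∀ x, m ≤ ustar x := hu.le_of_forall_le hpos hgm
  have huC : ∀ x, ustar x ≤ C := fun x => (le_abs_self _).trans (hC x)
  have hC0 : 0 < C := hm.trans_le ((hul 0).trans (huC 0))
  intro ε hε
  obtain ⟨L, hL, hperiods⟩ := hg (ε * m / (4 * C)) (by positivity)
  refine ⟨L, hL, fun t => ?_⟩
  obtain ⟨s, hs, hgs⟩ := hperiods t
  refine ⟨s, hs, fun x => ?_⟩
  calc |ustar (x + s) - ustar x| ≤ 2 * C * (ε * m / (4 * C)) / m :=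
        hu.abs_sub_le (hu.comp_add_const s) hm (by positivity) hul (fun y => hul (y + s)) huC
          (fun y => huC (y + s)) hgs x
    _ = ε / 2 := by field_simp; ring
    _ < ε := half_lt_self hε
end

section
/- Let g : ℝ → ℝ be Bohr almost periodic with inf g > 0 and let u*_g denote the unique bounded positive steady state. Let u₀ : ℝ → ℝ be continuous with 0 < m ≤ u₀(x) ≤ M for all x ∈ ℝ, for some constants m, M. If u : ℝ × [0, ∞) → ℝ is a bounded classical solution of the Cauchy problem u_t = u_{xx} + u(g(x) − u) for x ∈ ℝ, t > 0 (C² in x, C¹ in t on ℝ × (0,∞), continuous on ℝ × [0,∞)) with u(x, 0) = u₀(x), then sup_{x ∈ ℝ} |u(x, t) − u*_g(x)| → 0 as t → +∞. -/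
/-!
Let `c = inf g > 0`. Since `u*'' = -u* (g - u*)`, the steady state is strictly concave wherever
`u* < c`; a positive function on `ℝ` cannot be strictly concave on a half-line on which it starts
non-increasing, so `c ≤ u*`. The steady-state equation also gives `g = u* - u*''/u*`, so `g` is
continuous, hence bounded because it is almost periodic.

If `β' = c β (1 - β)` (a logistic curve), then `u*(x) β(t)` has residual
`u* β (1 - β) (c - u*)` in `u_t = u_xx + u (g - u)`: it is a supersolution while `β ≥ 1` and a
subsolution while `0 < β ≤ 1`. Choosing two logistic curves with `u* β₋(0) ≤ u₀ ≤ u* β₊(0)`, the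
comparison principle (a weak maximum principle for bounded functions on `ℝ × [0, ∞)`, which is
where the upper bound on `g` enters) keeps `u` between `u* β₋` and `u* β₊`. Both curves tend
to `1`, so `u → u*` uniformly.
-/

open Filter Set Topology Real

theorem forall_ge_lt_of_deriv2_neg_below {φ : ℝ → ℝ} {c a : ℝ} (hd : Differentiable ℝ φ)
    (hd2 : Differentiable ℝ (deriv φ)) (hcc : ∀ x, φ x < c → deriv (deriv φ) x < 0)
    (ha : φ a < c) (hda : deriv φ a ≤ 0) : ∀ x, a ≤ x → φ x < c := by
  by_contra! hx
  obtain ⟨x₁, hax₁, hx₁⟩ := hx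
  have hK : IsCompact {x ∈ Icc a x₁ | c ≤ φ x} :=
    isCompact_Icc.inter_right (isClosed_le continuous_const hd.continuous)
  obtain ⟨b, ⟨⟨hab, hbx₁⟩, hb⟩, hbmin⟩ := hK.exists_isLeast ⟨x₁, ⟨hax₁, le_rfl⟩, hx₁⟩
  have hlt : ∀ y ∈ Ico a b, φ y < c := fun y hy => lt_of_not_ge fun hy' =>
    (hy.2.trans_le (hbmin ⟨⟨hy.1, hy.2.le.trans hbx₁⟩, hy'⟩)).false
  have hab' : a < b := lt_of_le_of_ne hab (by rintro rfl; linarith)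
  have hanti : StrictAntiOn (deriv φ) (Icc a b) :=
    strictAntiOn_of_deriv_neg (convex_Icc a b) hd2.continuous.continuousOn fun y hy => by
      rw [interior_Icc] at hy
      exact hcc y (hlt y ⟨hy.1.le, hy.2⟩)
  have hφ : φ b - φ a ≤ 0 * (b - a) :=
    (convex_Icc a b).image_sub_le_mul_sub_of_deriv_le hd.continuous.continuousOn
      hd.differentiableOn (fun y hy => by
        rw [interior_Icc] at hy
        exact ((hanti ⟨le_rfl, hab'.le⟩ ⟨hy.1.le, hy.2.le⟩ hy.1).trans_le hda).le)
      a ⟨le_rfl, hab'.le⟩ b ⟨hab'.le, le_rfl⟩ hab'.le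
  linarith

theorem exists_nonpos_of_deriv2_neg_on_Ici {φ : ℝ → ℝ} {a : ℝ} (hd : Differentiable ℝ φ)
    (hd2 : Differentiable ℝ (deriv φ)) (hneg : ∀ x, a ≤ x → deriv (deriv φ) x < 0)
    (hda : deriv φ a ≤ 0) : ∃ x, φ x ≤ 0 := by
  have hanti : StrictAntiOn (deriv φ) (Ici a) :=
    strictAntiOn_of_deriv_neg (convex_Ici a) hd2.continuous.continuousOn fun y hy => by
      rw [interior_Ici] at hy
      exact hneg y hy.le
  set b := a + 1
  set d := deriv φ b
  have hd_neg : d < 0 := (hanti self_mem_Ici (by simp [b]) (by simp [b])).trans_le hda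
  have htangent : ∀ x, b ≤ x → φ x - φ b ≤ d * (x - b) :=
    fun x hx => (convex_Ici b).image_sub_le_mul_sub_of_deriv_le hd.continuous.continuousOn
      hd.differentiableOn (fun y hy => by
        rw [interior_Ici] at hy
        exact (hanti (by simp [b]) (mem_Ici.2 (by linarith [mem_Ioi.1 hy])) hy).le)
      b self_mem_Ici x hx hx
  have hstep : 0 ≤ -(|φ b| / d) :=
    neg_nonneg.2 (div_nonpos_of_nonneg_of_nonpos (abs_nonneg _) hd_neg.le)
  refine ⟨b - |φ b| / d, ?_⟩
  have hx := htangent (b - |φ b| / d) (by linarith)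
  rw [sub_sub_cancel_left, mul_neg, mul_div_cancel₀ _ hd_neg.ne] at hx
  linarith [le_abs_self (φ b)]

theorem deriv_pos_of_pos_of_deriv2_neg_below {φ : ℝ → ℝ} {c a : ℝ} (hd : Differentiable ℝ φ)
    (hd2 : Differentiable ℝ (deriv φ)) (hpos : ∀ x, 0 < φ x)
    (hcc : ∀ x, φ x < c → deriv (deriv φ) x < 0) (ha : φ a < c) : 0 < deriv φ a := by
  by_contra! hda
  have hlt := forall_ge_lt_of_deriv2_neg_below hd hd2 hcc ha hda
  obtain ⟨y, hy⟩ := exists_nonpos_of_deriv2_neg_on_Ici hd hd2 (fun y hy => hcc y (hlt y hy)) hda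
  exact (hpos y).not_ge hy

theorem le_of_pos_of_deriv2_neg_below {φ : ℝ → ℝ} {c : ℝ} (hd : Differentiable ℝ φ)
    (hd2 : Differentiable ℝ (deriv φ)) (hpos : ∀ x, 0 < φ x)
    (hcc : ∀ x, φ x < c → deriv (deriv φ) x < 0) (x : ℝ) : c ≤ φ x := by
  by_contra! hx
  have hright := deriv_pos_of_pos_of_deriv2_neg_below hd hd2 hpos hcc hx
  have hderiv : deriv (fun y => φ (-y)) = fun y => -deriv φ (-y) := funext (deriv_comp_neg φ)
  have hleft := deriv_pos_of_pos_of_deriv2_neg_below (φ := fun y => φ (-y)) (a := -x)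
    (hd.comp differentiable_neg) (by rw [hderiv]; exact (hd2.comp differentiable_neg).neg)
    (fun y => hpos (-y)) (fun y hy => by
      rw [hderiv, deriv.fun_neg, deriv_comp_neg, neg_neg]
      exact hcc _ hy) (by simpa using hx)
  simp only [hderiv, neg_neg] at hleft
  linarith

theorem BohrAlmostPeriodic.bddAbove_range {f : ℝ → ℝ} (hf : BohrAlmostPeriodic f)
    (hc : Continuous f) : BddAbove (range f) := by
  obtain ⟨L, -, hL⟩ := hf 1 one_pos
  obtain ⟨K, hK⟩ := (isCompact_Icc (a := 0) (b := L)).bddAbove_image hc.continuousOn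
  refine ⟨K + 1, forall_mem_range.2 fun x => ?_⟩
  obtain ⟨s, ⟨hs₁, hs₂⟩, hs⟩ := hL (-x)
  have hmem : f (x + s) ≤ K := hK (mem_image_of_mem f ⟨by linarith, by linarith⟩)
  linarith [(abs_lt.1 (hs x)).1]

namespace IsBddPosSteadyState

variable {g u : ℝ → ℝ}

theorem differentiable (h : IsBddPosSteadyState g u) : Differentiable ℝ u :=
  h.1.differentiable (by norm_num)

theorem differentiable_deriv (h : IsBddPosSteadyState g u) : Differentiable ℝ (deriv u) :=
  (h.1.deriv' (n := 1)).differentiable one_ne_zero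

theorem continuous_coeff_s4 (h : IsBddPosSteadyState g u) : Continuous g := by
  have hg : g = fun x => u x - deriv (deriv u) x / u x := funext fun x => by
    have := h.2.2.2 x
    field_simp [(h.2.2.1 x).ne']
    linarith
  rw [hg]
  exact h.1.continuous.sub (((h.1.deriv' (n := 1)).continuous_deriv le_rfl).div h.1.continuous
    fun x => (h.2.2.1 x).ne')

theorem le_of_forall_le_coeff (h : IsBddPosSteadyState g u) {c : ℝ} (hc : ∀ x, c ≤ g x) (x : ℝ) :
    c ≤ u x :=
  le_of_pos_of_deriv2_neg_below h.differentiable h.differentiable_deriv h.2.2.1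
    (fun x hx => by nlinarith [h.2.2.2 x, h.2.2.1 x, hc x]) x

end IsBddPosSteadyState

noncomputable def partialT (w : ℝ → ℝ → ℝ) (x t : ℝ) : ℝ := deriv (fun s => w x s) t

noncomputable def partialXX (w : ℝ → ℝ → ℝ) (x t : ℝ) : ℝ := deriv (deriv fun y => w y t) x

structure IsParabolicRegular (w : ℝ → ℝ → ℝ) : Prop where
  continuousOn : ContinuousOn (fun p : ℝ × ℝ => w p.1 p.2) {p | 0 ≤ p.2}
  differentiableAt_x : ∀ x, ∀ t > 0, DifferentiableAt ℝ (fun y => w y t) x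
  differentiableAt_deriv_x : ∀ x, ∀ t > 0, DifferentiableAt ℝ (deriv fun y => w y t) x
  differentiableAt_t : ∀ x, ∀ t > 0, DifferentiableAt ℝ (fun s => w x s) t

namespace IsParabolicRegular

variable {v w : ℝ → ℝ → ℝ} {a : ℝ → ℝ}

theorem deriv_x_add (hv : IsParabolicRegular v) (hw : IsParabolicRegular w) {t : ℝ} (ht : 0 < t) :
    (deriv fun y => v y t + w y t) = fun y => deriv (fun y => v y t) y + deriv (fun y => w y t) y :=
  funext fun y => deriv_add (hv.differentiableAt_x y t ht) (hw.differentiableAt_x y t ht)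

theorem add (hv : IsParabolicRegular v) (hw : IsParabolicRegular w) :
    IsParabolicRegular fun x t => v x t + w x t where
  continuousOn := hv.continuousOn.add hw.continuousOn
  differentiableAt_x x t ht := (hv.differentiableAt_x x t ht).add (hw.differentiableAt_x x t ht)
  differentiableAt_deriv_x x t ht := by
    rw [deriv_x_add hv hw ht]
    exact (hv.differentiableAt_deriv_x x t ht).add (hw.differentiableAt_deriv_x x t ht)
  differentiableAt_t x t ht := (hv.differentiableAt_t x t ht).add (hw.differentiableAt_t x t ht)

theorem partialT_add (hv : IsParabolicRegular v) (hw : IsParabolicRegular w) {x t : ℝ}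
    (ht : 0 < t) : partialT (fun x t => v x t + w x t) x t = partialT v x t + partialT w x t :=
  deriv_add (hv.differentiableAt_t x t ht) (hw.differentiableAt_t x t ht)

theorem partialXX_add (hv : IsParabolicRegular v) (hw : IsParabolicRegular w) {x t : ℝ}
    (ht : 0 < t) :
    partialXX (fun x t => v x t + w x t) x t = partialXX v x t + partialXX w x t := by
  simp only [partialXX]
  rw [deriv_x_add hv hw ht]
  exact deriv_add (hv.differentiableAt_deriv_x x t ht) (hw.differentiableAt_deriv_x x t ht)

theorem deriv_x_sub (hv : IsParabolicRegular v) (hw : IsParabolicRegular w) {t : ℝ} (ht : 0 < t) :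
    (deriv fun y => v y t - w y t) = fun y => deriv (fun y => v y t) y - deriv (fun y => w y t) y :=
  funext fun y => deriv_sub (hv.differentiableAt_x y t ht) (hw.differentiableAt_x y t ht)

theorem sub (hv : IsParabolicRegular v) (hw : IsParabolicRegular w) :
    IsParabolicRegular fun x t => v x t - w x t where
  continuousOn := hv.continuousOn.sub hw.continuousOn
  differentiableAt_x x t ht := (hv.differentiableAt_x x t ht).sub (hw.differentiableAt_x x t ht)
  differentiableAt_deriv_x x t ht := by
    rw [deriv_x_sub hv hw ht]
    exact (hv.differentiableAt_deriv_x x t ht).sub (hw.differentiableAt_deriv_x x t ht)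
  differentiableAt_t x t ht := (hv.differentiableAt_t x t ht).sub (hw.differentiableAt_t x t ht)

theorem partialT_sub (hv : IsParabolicRegular v) (hw : IsParabolicRegular w) {x t : ℝ}
    (ht : 0 < t) : partialT (fun x t => v x t - w x t) x t = partialT v x t - partialT w x t :=
  deriv_sub (hv.differentiableAt_t x t ht) (hw.differentiableAt_t x t ht)

theorem partialXX_sub (hv : IsParabolicRegular v) (hw : IsParabolicRegular w) {x t : ℝ}
    (ht : 0 < t) :
    partialXX (fun x t => v x t - w x t) x t = partialXX v x t - partialXX w x t := by
  simp only [partialXX]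
  rw [deriv_x_sub hv hw ht]
  exact deriv_sub (hv.differentiableAt_deriv_x x t ht) (hw.differentiableAt_deriv_x x t ht)

theorem mul_time (hw : IsParabolicRegular w) (ha : Differentiable ℝ a) :
    IsParabolicRegular fun x t => w x t * a t where
  continuousOn := hw.continuousOn.mul (ha.continuous.comp continuous_snd).continuousOn
  differentiableAt_x x t ht := (hw.differentiableAt_x x t ht).mul_const _
  differentiableAt_deriv_x x t ht := by
    rw [deriv_mul_const_field']
    exact (hw.differentiableAt_deriv_x x t ht).mul_const _
  differentiableAt_t x t ht := (hw.differentiableAt_t x t ht).mul (ha t)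

theorem partialT_mul_time (hw : IsParabolicRegular w) (ha : Differentiable ℝ a) {x t : ℝ}
    (ht : 0 < t) :
    partialT (fun x t => w x t * a t) x t = partialT w x t * a t + w x t * deriv a t :=
  deriv_mul (hw.differentiableAt_t x t ht) (ha t)

theorem partialXX_mul_time (w : ℝ → ℝ → ℝ) (a : ℝ → ℝ) (x t : ℝ) :
    partialXX (fun x t => w x t * a t) x t = partialXX w x t * a t := by
  simp only [partialXX, deriv_mul_const_field']

end IsParabolicRegular

section Separable

variable {f b : ℝ → ℝ}

theorem isParabolicRegular_separable (hf : Differentiable ℝ f) (hf' : Differentiable ℝ (deriv f))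
    (hb : ∀ t ≥ 0, DifferentiableAt ℝ b t) : IsParabolicRegular fun x t => f x * b t where
  continuousOn := (hf.continuous.comp continuous_fst).continuousOn.mul fun p hp =>
    ((hb p.2 hp).continuousAt.comp continuous_snd.continuousAt).continuousWithinAt
  differentiableAt_x x t ht := (hf x).mul_const _
  differentiableAt_deriv_x x t ht := by
    rw [deriv_mul_const_field']
    exact (hf' x).mul_const _
  differentiableAt_t x t ht := (hb t ht.le).const_mul _

theorem partialT_separable (f b : ℝ → ℝ) (x t : ℝ) :
    partialT (fun x t => f x * b t) x t = f x * deriv b t :=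
  deriv_const_mul_field _

theorem partialXX_separable (f b : ℝ → ℝ) (x t : ℝ) :
    partialXX (fun x t => f x * b t) x t = deriv (deriv f) x * b t := by
  simp only [partialXX, deriv_mul_const_field']

end Separable

theorem IsLocalMin.deriv_deriv_nonneg {f : ℝ → ℝ} {a : ℝ} (h : IsLocalMin f a)
    (hc : ContinuousAt f a) : 0 ≤ deriv (deriv f) a := by
  by_contra! hneg
  have hmax : IsLocalMax f a := isLocalMax_of_deriv_deriv_neg hneg h.deriv_eq_zero hc
  have hconst : f =ᶠ[𝓝 a] fun _ => f a := by
    filter_upwards [h, hmax] with y hmin hmax using le_antisymm hmax hmin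
  have : deriv (deriv f) a = 0 := by
    rw [hconst.deriv.deriv_eq]
    simp
  exact hneg.ne this

theorem IsParabolicRegular.pos_of_partialXX_lt_partialT {w : ℝ → ℝ → ℝ}
    (hw : IsParabolicRegular w) (hinit : ∀ x, 0 < w x 0) {R : ℝ}
    (hfar : ∀ p : ℝ × ℝ, 0 ≤ p.2 → R ≤ ‖p‖ → 0 < w p.1 p.2)
    (hstrict : ∀ x, ∀ t > 0, w x t ≤ 0 → partialXX w x t < partialT w x t) :
    ∀ x, ∀ t ≥ 0, 0 < w x t := by
  by_contra! h
  obtain ⟨x₀, t₀, ht₀, hw₀⟩ := h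
  have hH : IsClosed {p : ℝ × ℝ | 0 ≤ p.2} := isClosed_le continuous_const continuous_snd
  obtain ⟨⟨x, t⟩, (ht : 0 ≤ t), hmin⟩ := hw.continuousOn.exists_isMinOn' hH (x₀ := (x₀, t₀)) ht₀ (by
    filter_upwards [mem_inf_of_left (tendsto_norm_cocompact_atTop.eventually_ge_atTop R),
      mem_inf_of_right (mem_principal_self _)] with p hR hp
    exact hw₀.trans (hfar p hp hR).le)
  have hwx : w x t ≤ 0 := (hmin (show (x₀, t₀) ∈ _ from ht₀)).trans hw₀
  have htpos : 0 < t := lt_of_le_of_ne ht fun h0 => by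
    subst h0
    exact (hinit x).not_ge hwx
  have hxx : 0 ≤ partialXX w x t :=
    IsLocalMin.deriv_deriv_nonneg
      (Filter.Eventually.of_forall fun y => hmin (show (y, t) ∈ _ from ht))
      (hw.differentiableAt_x x t htpos).continuousAt
  have htt : partialT w x t = 0 := IsLocalMin.deriv_eq_zero (by
    filter_upwards [Ioi_mem_nhds htpos] with s hs using hmin (a := (x, s)) (mem_ofPred.2 hs.le))
  linarith [hstrict x t htpos hwx]

theorem deriv_exp_const_mul (k t : ℝ) : deriv (fun s => exp (k * s)) t = k * exp (k * t) := by
  simpa using congrFun (iteratedDeriv_exp_const_mul 1 k) t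

theorem norm_le_one_add_sq_mul_exp (x : ℝ) {t : ℝ} (ht : 0 ≤ t) :
    ‖(x, t)‖ ≤ (1 + x ^ 2) * exp (2 * t) := by
  have h2t := add_one_le_exp (2 * t)
  rw [Prod.norm_def, Real.norm_eq_abs, Real.norm_eq_abs, abs_of_nonneg ht]
  refine max_le ?_ ?_ <;> nlinarith [sq_abs x, abs_nonneg x, sq_nonneg (|x| - 1)]

/-- The penalty `(1 + x²) e^{2t}` satisfies `∂ₜ - ∂ₓₓ = 2x² e^{2t} ≥ 0` and grows at infinity,
and the factor `e^{-λt}` turns the zeroth-order coefficient `h` into `h - λ ≤ -1`. -/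
theorem IsParabolicRegular.pos_mul_exp_add_penalty {z h : ℝ → ℝ → ℝ} (hz : IsParabolicRegular z)
    {C lam ε : ℝ} (hbdd : ∀ x t, 0 ≤ t → |z x t| ≤ C) (hlam : 0 < lam)
    (hh : ∀ x, ∀ t > 0, h x t + 1 ≤ lam)
    (hineq : ∀ x, ∀ t > 0, partialXX z x t + h x t * z x t ≤ partialT z x t)
    (hinit : ∀ x, 0 ≤ z x 0) (hε : 0 < ε) :
    ∀ x, ∀ t ≥ 0, 0 < z x t * exp (-lam * t) + ε * (1 + x ^ 2) * exp (2 * t) := by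
  have hf' : deriv (fun x : ℝ => ε * (1 + x ^ 2)) = fun x => ε * (2 * x) := funext fun x => by simp
  have hf'' : ∀ x, deriv (deriv fun x : ℝ => ε * (1 + x ^ 2)) x = ε * 2 := fun x => by simp [hf']
  have ha : Differentiable ℝ fun t => exp (-lam * t) := by fun_prop
  have hza := hz.mul_time ha
  have hsep := isParabolicRegular_separable (f := fun x => ε * (1 + x ^ 2))
    (b := fun t => exp (2 * t)) (by fun_prop) (by rw [hf']; fun_prop) fun t _ => by fun_prop
  refine (hza.add hsep).pos_of_partialXX_lt_partialT (R := C / ε + 1)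
    (fun x => by simpa using add_pos_of_nonneg_of_pos (hinit x) (by positivity))
    ?far fun x t ht hneg => ?strict
  case far =>
    rintro ⟨x, t⟩ (ht : 0 ≤ t) hR
    have hzC := abs_le.1 (hbdd x t ht)
    have hC : 0 ≤ C := (abs_nonneg _).trans (hbdd x t ht)
    have he : exp (-lam * t) ≤ 1 := exp_le_one_iff.2 (by nlinarith)
    have hεC : ε * (C / ε + 1) = C + ε := by field_simp
    show 0 < z x t * exp (-lam * t) + ε * (1 + x ^ 2) * exp (2 * t)
    nlinarith [mul_le_mul_of_nonneg_left (hR.trans (norm_le_one_add_sq_mul_exp x ht)) hε.le,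
      mul_nonneg (by linarith : 0 ≤ z x t + C) (exp_pos (-lam * t)).le,
      mul_nonneg hC (by linarith : 0 ≤ 1 - exp (-lam * t))]
  case strict =>
    rw [hza.partialT_add hsep ht, hza.partialXX_add hsep ht, hz.partialT_mul_time ha ht,
      partialXX_mul_time, partialT_separable, partialXX_separable, hf'', deriv_exp_const_mul,
      deriv_exp_const_mul]
    have hE : 0 < exp (-lam * t) ∧ 0 < exp (2 * t) := ⟨exp_pos _, exp_pos _⟩
    have hzneg : z x t < 0 := by
      by_contra! hz0
      nlinarith [mul_nonneg hz0 hE.1.le,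
        mul_pos (mul_pos hε (by positivity : (0 : ℝ) < 1 + x ^ 2)) hE.2]
    have hgap : 0 < partialT z x t - partialXX z x t - lam * z x t := by
      nlinarith [hineq x t ht, hh x t ht]
    nlinarith [mul_pos hgap hE.1, mul_nonneg (mul_nonneg hε.le (sq_nonneg x)) hE.2.le]

theorem IsParabolicRegular.nonneg_of_partialXX_add_mul_le_partialT {z h : ℝ → ℝ → ℝ}
    (hz : IsParabolicRegular z) {C K : ℝ} (hbdd : ∀ x t, 0 ≤ t → |z x t| ≤ C)
    (hK : ∀ x, ∀ t > 0, h x t ≤ K)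
    (hineq : ∀ x, ∀ t > 0, partialXX z x t + h x t * z x t ≤ partialT z x t)
    (hinit : ∀ x, 0 ≤ z x 0) : ∀ x, ∀ t ≥ 0, 0 ≤ z x t := by
  set lam := max K 0 + 1
  have hpen := fun ε (hε : 0 < ε) => hz.pos_mul_exp_add_penalty hbdd (lam := lam)
    (by positivity) (fun x t ht => by linarith [hK x t ht, le_max_left K 0]) hineq hinit hε
  intro x t ht
  have hlim : Tendsto (fun ε => z x t * exp (-lam * t) + ε * (1 + x ^ 2) * exp (2 * t))
      (𝓝[>] 0) (𝓝 (z x t * exp (-lam * t))) :=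
    (Continuous.tendsto' (by fun_prop) _ _ (by simp)).mono_left nhdsWithin_le_nhds
  have := ge_of_tendsto hlim (eventually_nhdsWithin_of_forall fun ε hε => (hpen ε hε x t ht).le)
  exact (mul_nonneg_iff_of_pos_right (exp_pos _)).1 this

noncomputable def logistic (c k t : ℝ) : ℝ := (1 + k * exp (-c * t))⁻¹

section Logistic

variable {c k t : ℝ}

theorem one_add_mul_exp_pos (hc : 0 ≤ c) (hk : -1 < k) (ht : 0 ≤ t) :
    0 < 1 + k * exp (-c * t) := by
  rcases le_total 0 k with hk0 | hk0
  · positivity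
  · have : exp (-c * t) ≤ 1 := exp_le_one_iff.2 (by nlinarith)
    nlinarith

theorem hasDerivAt_logistic (hpos : 0 < 1 + k * exp (-c * t)) :
    HasDerivAt (logistic c k) (c * logistic c k t * (1 - logistic c k t)) t := by
  have hd : HasDerivAt (fun s => 1 + k * exp (-c * s)) (k * (-c * exp (-c * t))) t := by
    simpa [mul_comm] using (((hasDerivAt_id t).const_mul (-c)).exp.const_mul k).const_add 1
  refine (hd.inv hpos.ne').congr_deriv ?_
  simp only [logistic]
  generalize exp (-c * t) = e at hpos ⊢
  field_simp
  ring

theorem logistic_zero : logistic c k 0 = (1 + k)⁻¹ := by simp [logistic]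

theorem tendsto_logistic (hc : 0 < c) : Tendsto (logistic c k) atTop (𝓝 1) := by
  have hexp : Tendsto (fun t => exp (-c * t)) atTop (𝓝 0) :=
    tendsto_exp_atBot.comp (tendsto_id.const_mul_atTop_of_neg (neg_lt_zero.2 hc))
  change Tendsto (fun t => (1 + k * exp (-c * t))⁻¹) _ _
  simpa using ((hexp.const_mul k).const_add 1).inv₀ (by simp)

theorem logistic_mem_Ioc (hk : 0 ≤ k) : logistic c k t ∈ Ioc 0 1 :=
  ⟨by unfold logistic; positivity,
    inv_le_one_of_one_le₀ (by simp only [le_add_iff_nonneg_right]; positivity)⟩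

theorem logistic_mem_Icc (hc : 0 ≤ c) (hk : -1 < k) (hk0 : k ≤ 0) (ht : 0 ≤ t) :
    logistic c k t ∈ Icc 1 (1 + k)⁻¹ := by
  have hpos := one_add_mul_exp_pos hc hk ht
  have he : exp (-c * t) ≤ 1 := exp_le_one_iff.2 (by nlinarith)
  exact ⟨one_le_inv_iff₀.2 ⟨hpos, by nlinarith [exp_pos (-c * t)]⟩,
    inv_anti₀ (by linarith) (by nlinarith)⟩

end Logistic

noncomputable def kppResidual (g : ℝ → ℝ) (w : ℝ → ℝ → ℝ) (x t : ℝ) : ℝ :=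
  partialT w x t - partialXX w x t - w x t * (g x - w x t)

theorem IsParabolicRegular.le_of_kppResidual_nonpos_of_nonneg {g : ℝ → ℝ} {v w : ℝ → ℝ → ℝ}
    (hv : IsParabolicRegular v) (hw : IsParabolicRegular w)
    (hvb : ∃ C, ∀ x t, 0 ≤ t → |v x t| ≤ C) (hwb : ∃ C, ∀ x t, 0 ≤ t → |w x t| ≤ C)
    (hg : BddAbove (range g)) (hsub : ∀ x, ∀ t > 0, kppResidual g v x t ≤ 0)
    (hsuper : ∀ x, ∀ t > 0, 0 ≤ kppResidual g w x t) (h0 : ∀ x, v x 0 ≤ w x 0) :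
    ∀ x, ∀ t ≥ 0, v x t ≤ w x t := by
  obtain ⟨Cv, hCv⟩ := hvb
  obtain ⟨Cw, hCw⟩ := hwb
  obtain ⟨K, hK⟩ := hg
  -- `w (g - w) - v (g - v) = (g - v - w) (w - v)`: the difference is a linear supersolution
  have hz := (hw.sub hv).nonneg_of_partialXX_add_mul_le_partialT
    (h := fun x t => g x - v x t - w x t) (C := Cw + Cv) (K := K + Cv + Cw)
    (fun x t ht => (abs_sub _ _).trans (add_le_add (hCw x t ht) (hCv x t ht)))
    (fun x t ht => by
      linarith [hK (mem_range_self x), (abs_le.1 (hCv x t ht.le)).1, (abs_le.1 (hCw x t ht.le)).1])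
    (fun x t ht => by
      have h1 := hsub x t ht
      have h2 := hsuper x t ht
      rw [kppResidual] at h1 h2
      rw [hw.partialT_sub hv ht, hw.partialXX_sub hv ht]
      linarith)
    (fun x => sub_nonneg.2 (h0 x))
  exact fun x t ht => sub_nonneg.1 (hz x t ht)

namespace IsBddPosSteadyState

variable {g ustar : ℝ → ℝ} {u : ℝ → ℝ → ℝ} {c : ℝ}

theorem kppResidual_mul {β : ℝ → ℝ} (h : IsBddPosSteadyState g ustar) {t : ℝ}
    (hβ : HasDerivAt β (c * β t * (1 - β t)) t) (x : ℝ) :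
    kppResidual g (fun x t => ustar x * β t) x t = ustar x * β t * (1 - β t) * (c - ustar x) := by
  rw [kppResidual, partialT_separable, partialXX_separable, hβ.deriv]
  linear_combination (-β t) * h.2.2.2 x

theorem isParabolicRegular_mul_logistic (h : IsBddPosSteadyState g ustar) {k : ℝ} (hc : 0 ≤ c)
    (hk : -1 < k) : IsParabolicRegular fun x t => ustar x * logistic c k t :=
  isParabolicRegular_separable h.differentiable h.differentiable_deriv fun _ ht =>
    (hasDerivAt_logistic (one_add_mul_exp_pos hc hk ht)).differentiableAt

theorem exists_le_mul_logistic (h : IsBddPosSteadyState g ustar) (hg : BddAbove (range g))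
    (hc : 0 < c) (hcg : ∀ x, c ≤ g x) (hu : IsParabolicRegular u)
    (hub : ∃ C, ∀ x t, 0 ≤ t → |u x t| ≤ C) (hsub : ∀ x, ∀ t > 0, kppResidual g u x t ≤ 0)
    {M : ℝ} (hM : ∀ x, u x 0 ≤ M) :
    ∃ k, ∀ x, ∀ t ≥ 0, u x t ≤ ustar x * logistic c k t := by
  obtain ⟨Cs, hCs⟩ := h.2.1
  have hMc : 0 < |M| + c := by positivity
  set k := c / (|M| + c) - 1
  have hk : -1 < k ∧ k ≤ 0 := by
    constructor
    · simp only [k]; linarith [div_pos hc hMc]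
    · simp only [k, sub_nonpos]; exact div_le_one_of_le₀ (by linarith [abs_nonneg M]) hMc.le
  have hk1 : (1 + k)⁻¹ = (|M| + c) / c := by simp [k]
  have hV := h.isParabolicRegular_mul_logistic hc.le hk.1
  refine ⟨k, hu.le_of_kppResidual_nonpos_of_nonneg hV hub ⟨Cs * (1 + k)⁻¹, fun x t ht => ?_⟩ hg
    hsub (fun x t ht => ?_) (fun x => ?_)⟩
  · have hβ := logistic_mem_Icc hc.le hk.1 hk.2 ht
    rw [abs_mul, abs_of_pos (zero_lt_one.trans_le hβ.1)]
    exact mul_le_mul (hCs x) hβ.2 (zero_le_one.trans hβ.1) ((abs_nonneg _).trans (hCs x))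
  · have hβ := logistic_mem_Icc hc.le hk.1 hk.2 ht.le
    rw [h.kppResidual_mul (hasDerivAt_logistic (one_add_mul_exp_pos hc.le hk.1 ht.le))]
    exact mul_nonneg_of_nonpos_of_nonpos
      (mul_nonpos_of_nonneg_of_nonpos (mul_pos (h.2.2.1 x) (zero_lt_one.trans_le hβ.1)).le
        (sub_nonpos.2 hβ.1)) (sub_nonpos.2 (h.le_of_forall_le_coeff hcg x))
  · rw [logistic_zero, hk1]
    have := h.le_of_forall_le_coeff hcg x
    calc u x 0 ≤ |M| + c := (hM x).trans (by linarith [le_abs_self M])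
      _ = c * ((|M| + c) / c) := by field_simp
      _ ≤ ustar x * ((|M| + c) / c) := by gcongr

theorem exists_mul_logistic_le (h : IsBddPosSteadyState g ustar) (hg : BddAbove (range g))
    (hc : 0 < c) (hcg : ∀ x, c ≤ g x) (hu : IsParabolicRegular u)
    (hub : ∃ C, ∀ x t, 0 ≤ t → |u x t| ≤ C) (hsuper : ∀ x, ∀ t > 0, 0 ≤ kppResidual g u x t)
    {m : ℝ} (hm : 0 < m) (hm0 : ∀ x, m ≤ u x 0) :
    ∃ k, ∀ x, ∀ t ≥ 0, ustar x * logistic c k t ≤ u x t := by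
  obtain ⟨Cs, hCs⟩ := h.2.1
  have hCs0 : 0 ≤ Cs := (abs_nonneg _).trans (hCs 0)
  have hk : 0 ≤ Cs / m := by positivity
  have hV := h.isParabolicRegular_mul_logistic hc.le (k := Cs / m) (by linarith)
  refine ⟨Cs / m, hV.le_of_kppResidual_nonpos_of_nonneg hu ⟨Cs, fun x t ht => ?_⟩ hub hg
    (fun x t ht => ?_) hsuper (fun x => ?_)⟩
  · have hβ := logistic_mem_Ioc (c := c) (t := t) hk
    rw [abs_mul, abs_of_pos hβ.1]
    simpa using mul_le_mul (hCs x) hβ.2 hβ.1.le hCs0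
  · have hβ := logistic_mem_Ioc (c := c) (t := t) hk
    rw [h.kppResidual_mul (hasDerivAt_logistic (by positivity))]
    exact mul_nonpos_of_nonneg_of_nonpos
      (mul_nonneg (mul_pos (h.2.2.1 x) hβ.1).le (sub_nonneg.2 hβ.2))
      (sub_nonpos.2 (h.le_of_forall_le_coeff hcg x))
  · rw [logistic_zero]
    calc ustar x * (1 + Cs / m)⁻¹ ≤ Cs * (1 + Cs / m)⁻¹ := by
          gcongr
          exact (le_abs_self _).trans (hCs x)
      _ = Cs * m / (m + Cs) := by field_simp
      _ ≤ m := by rw [div_le_iff₀ (by positivity)]; nlinarith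
      _ ≤ u x 0 := hm0 x

end IsBddPosSteadyState

theorem tendstoUniformly_of_mul_le_of_le_mul {ι X : Type*} {l : Filter ι} {F : ι → X → ℝ}
    {φ : X → ℝ} {a b : ι → ℝ} {C : ℝ} (hφ : ∀ x, |φ x| ≤ C) (ha : Tendsto a l (𝓝 1))
    (hb : Tendsto b l (𝓝 1)) (hlow : ∀ᶠ i in l, ∀ x, φ x * a i ≤ F i x)
    (hup : ∀ᶠ i in l, ∀ x, F i x ≤ φ x * b i) : TendstoUniformly F φ l := by
  rw [Metric.tendstoUniformly_iff]
  intro ε hε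
  have hδ : 0 < ε / (|C| + 1) := by positivity
  filter_upwards [hlow, hup, ha.eventually (Metric.ball_mem_nhds 1 hδ),
    hb.eventually (Metric.ball_mem_nhds 1 hδ)] with i hl hu hai hbi x
  have hsmall : ∀ s ∈ Metric.ball (1 : ℝ) (ε / (|C| + 1)), |φ x * (s - 1)| < ε := by
    intro s hs
    rw [Metric.mem_ball, Real.dist_eq] at hs
    rw [abs_mul]
    calc |φ x| * |s - 1| ≤ |C| * |s - 1| :=
          mul_le_mul_of_nonneg_right ((hφ x).trans (le_abs_self C)) (abs_nonneg _)
      _ < (|C| + 1) * (ε / (|C| + 1)) := by nlinarith [abs_nonneg C, abs_nonneg (s - 1)]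
      _ = ε := by field_simp
  rw [Real.dist_eq, abs_sub_lt_iff]
  constructor
  · linarith [hl x, neg_abs_le (φ x * (a i - 1)), hsmall _ hai]
  · linarith [hu x, le_abs_self (φ x * (b i - 1)), hsmall _ hbi]

theorem cauchy_problem_converges_to_steady_state_general (g ustar u₀ : ℝ → ℝ)
    (hg : BohrAlmostPeriodic g) (hginf : ∃ m > (0 : ℝ), ∀ x : ℝ, m ≤ g x)
    (hstar : IsBddPosSteadyState g ustar)
    (m M : ℝ) (hm : 0 < m)
    (hu₀ : ∀ x : ℝ, m ≤ u₀ x ∧ u₀ x ≤ M)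
    (u : ℝ → ℝ → ℝ)
    (hbdd : ∃ C : ℝ, ∀ x t : ℝ, 0 ≤ t → |u x t| ≤ C)
    (hcont : ContinuousOn (fun p : ℝ × ℝ => u p.1 p.2) {p : ℝ × ℝ | 0 ≤ p.2})
    (hreg_x : ∀ x : ℝ, ∀ t > (0 : ℝ), DifferentiableAt ℝ (fun y => u y t) x ∧
      DifferentiableAt ℝ (deriv fun y => u y t) x)
    (hreg_t : ∀ x : ℝ, ∀ t > (0 : ℝ), DifferentiableAt ℝ (fun s => u x s) t)
    (hpde : ∀ x : ℝ, ∀ t > (0 : ℝ),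
      deriv (fun s => u x s) t = deriv (deriv fun y => u y t) x + u x t * (g x - u x t))
    (hinit : ∀ x : ℝ, u x 0 = u₀ x) :
    ∀ ε > (0 : ℝ), ∃ T : ℝ, ∀ t ≥ T, ∀ x : ℝ, |u x t - ustar x| < ε := by
  obtain ⟨c, hc, hcg⟩ := hginf
  have hgK : BddAbove (range g) := hg.bddAbove_range hstar.continuous_coeff_s4
  have hu : IsParabolicRegular u :=
    ⟨hcont, fun x t ht => (hreg_x x t ht).1, fun x t ht => (hreg_x x t ht).2, hreg_t⟩
  have hres : ∀ x, ∀ t > 0, kppResidual g u x t = 0 := fun x t ht => by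
    rw [kppResidual, partialT, partialXX, hpde x t ht]
    ring
  obtain ⟨k₁, hupper⟩ := hstar.exists_le_mul_logistic hgK hc hcg hu hbdd
    (fun x t ht => (hres x t ht).le) (M := M) fun x => hinit x ▸ (hu₀ x).2
  obtain ⟨k₂, hlower⟩ := hstar.exists_mul_logistic_le hgK hc hcg hu hbdd
    (fun x t ht => (hres x t ht).ge) hm fun x => hinit x ▸ (hu₀ x).1
  obtain ⟨Cs, hCs⟩ := hstar.2.1
  have hconv : TendstoUniformly (fun t x => u x t) ustar atTop :=
    tendstoUniformly_of_mul_le_of_le_mul hCs (tendsto_logistic hc) (tendsto_logistic hc)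
      ((eventually_ge_atTop 0).mono fun t ht x => hlower x t ht)
      ((eventually_ge_atTop 0).mono fun t ht x => hupper x t ht)
  intro ε hε
  obtain ⟨T, hT⟩ := eventually_atTop.1 (Metric.tendstoUniformly_iff.1 hconv ε hε)
  exact ⟨T, fun t ht x => by simpa [Real.dist_eq, abs_sub_comm] using hT t ht x⟩

theorem cauchy_problem_converges_to_steady_state (g ustar u₀ : ℝ → ℝ)
    (hg : BohrAlmostPeriodic g) (hginf : ∃ m > (0 : ℝ), ∀ x : ℝ, m ≤ g x)
    (hstar : IsBddPosSteadyState g ustar)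
    (hu₀c : Continuous u₀) (m M : ℝ) (hm : 0 < m)
    (hu₀ : ∀ x : ℝ, m ≤ u₀ x ∧ u₀ x ≤ M)
    (u : ℝ → ℝ → ℝ)
    (hbdd : ∃ C : ℝ, ∀ x t : ℝ, 0 ≤ t → |u x t| ≤ C)
    (hcont : ContinuousOn (fun p : ℝ × ℝ => u p.1 p.2) {p : ℝ × ℝ | 0 ≤ p.2})
    (hreg_x : ∀ x : ℝ, ∀ t > (0 : ℝ), DifferentiableAt ℝ (fun y => u y t) x ∧
      DifferentiableAt ℝ (deriv fun y => u y t) x)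
    (hreg_t : ∀ x : ℝ, ∀ t > (0 : ℝ), DifferentiableAt ℝ (fun s => u x s) t)
    (hpde : ∀ x : ℝ, ∀ t > (0 : ℝ),
      deriv (fun s => u x s) t = deriv (deriv fun y => u y t) x + u x t * (g x - u x t))
    (hinit : ∀ x : ℝ, u x 0 = u₀ x) :
    ∀ ε > (0 : ℝ), ∃ T : ℝ, ∀ t ≥ T, ∀ x : ℝ, |u x t - ustar x| < ε :=
  cauchy_problem_converges_to_steady_state_general g ustar u₀ hg hginf hstar m M hm hu₀ u hbdd hcont
    hreg_x hreg_t hpde hinit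
end

section
/- Fix μ > 0, let g : ℝ → ℝ be Bohr almost periodic with inf g > 0, and let (ũ, h̃) be an almost periodic semi-wave solution of (FBP_g) connecting u*_g and 0. Then there exist ε > 0 and δ > 0 such that ũ(x, t) ≥ ε for every t ∈ ℝ and every x ≤ h̃(t) − δ. -/
/-- `(u, h)` is a classical solution of the free boundary problem
`u_t = u_xx + u (g x - u)` for `x < h t`, `u (h t) t = 0`, `h' t = -μ u_x (h t) t`,
for times `t` in the set `J`. -/
structure IsFBPSol (μ : ℝ) (g : ℝ → ℝ) (J : Set ℝ) (u : ℝ → ℝ → ℝ) (h : ℝ → ℝ) : Prop where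
  h_diff : ∀ t ∈ J, DifferentiableAt ℝ h t
  h_deriv_cont : ContinuousOn (deriv h) J
  u_cont : ContinuousOn (fun p : ℝ × ℝ => u p.1 p.2) {p : ℝ × ℝ | p.2 ∈ J ∧ p.1 ≤ h p.2}
  u_reg_x : ∀ t ∈ J, ∀ x < h t, DifferentiableAt ℝ (fun y => u y t) x ∧
      DifferentiableAt ℝ (deriv fun y => u y t) x
  u_reg_t : ∀ t ∈ J, ∀ x < h t, DifferentiableAt ℝ (fun s => u x s) t
  pde : ∀ t ∈ J, ∀ x < h t,
      deriv (fun s => u x s) t = deriv (deriv fun y => u y t) x + u x t * (g x - u x t)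
  bdry : ∀ t ∈ J, u (h t) t = 0
  stefan : ∀ t ∈ J, deriv h t = -μ * deriv (fun y => u y t) (h t)

/-- The profile `v (ξ, τ) = u (ξ + τ, h⁻¹ τ)` of a solution with strictly monotone front `h`. -/
noncomputable def profile (u : ℝ → ℝ → ℝ) (h : ℝ → ℝ) (ξ τ : ℝ) : ℝ :=
  u (ξ + τ) (Function.invFun h τ)

/-- `(u, h)` is an almost periodic semi-wave solution of the free boundary problem
connecting the steady state `ustar` and `0`. -/
structure IsAPSemiWave (μ : ℝ) (g ustar : ℝ → ℝ) (u : ℝ → ℝ → ℝ) (h : ℝ → ℝ) : Prop where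
  sol : IsFBPSol μ g Set.univ u h
  bdd : ∃ C : ℝ, ∀ x t : ℝ, |u x t| ≤ C
  pos : ∀ t : ℝ, ∀ x < h t, 0 < u x t
  mono : StrictMono h
  tendsto_top : Filter.Tendsto h Filter.atTop Filter.atTop
  tendsto_bot : Filter.Tendsto h Filter.atBot Filter.atBot
  almost_periodic : ∀ ε > (0 : ℝ), ∃ L > (0 : ℝ), ∀ r : ℝ, ∃ s ∈ Set.Icc r (r + L),
      ∀ ξ ≤ (0 : ℝ), ∀ τ : ℝ, |profile u h ξ (τ + s) - profile u h ξ τ| < ε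
  connects : ∀ ε > (0 : ℝ), ∃ X : ℝ, ∀ ξ ≤ X, ∀ τ : ℝ,
      |profile u h ξ τ - ustar (ξ + τ)| < ε

/-!
Write `m = inf g > 0`. By the connecting property of the semi-wave, `ũ(x, t)` is within `m / 2`
of `u*_g(x)` once `x - h̃(t)` is far enough to the left, so it suffices that `u*_g ≥ m`.
Where `u*_g < m` the equation gives `(u*_g)'' = u*_g (u*_g - g) < 0`. If `u*_g(x₀) < m` with,
say, `(u*_g)'(x₀) ≤ 0`, then `u*_g` keeps decreasing and stays below `m` on `[x₀, ∞)`; there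
its slope is eventually bounded by a negative constant, which contradicts positivity.
-/

open Set

lemma exists_nonpos_of_deriv_le_neg {u : ℝ → ℝ} (hu : Differentiable ℝ u) {p c : ℝ}
    (hc : c < 0) (hle : ∀ x, p < x → deriv u x ≤ c) : ∃ x, u x ≤ 0 := by
  set d := |u p| / -c
  have hd : 0 ≤ d := div_nonneg (abs_nonneg _) (neg_nonneg.2 hc.le)
  have hdecay : u (p + d) - u p ≤ c * (p + d - p) :=
    (convex_Ici p).image_sub_le_mul_sub_of_deriv_le hu.continuous.continuousOn
      hu.differentiableOn (fun x hx => hle x (by simpa using hx))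
      p self_mem_Ici (p + d) (by simpa using hd) (by linarith)
  have hcd : c * d = -|u p| := by simp only [d]; field_simp [hc.ne]
  exact ⟨p + d, by rw [add_sub_cancel_left, hcd] at hdecay; linarith [le_abs_self (u p)]⟩

lemma not_lt_of_deriv_nonpos_of_deriv2_neg {u : ℝ → ℝ} {m x₀ : ℝ} (hu : Differentiable ℝ u)
    (hu' : Differentiable ℝ (deriv u)) (hpos : ∀ x, 0 < u x)
    (hconc : ∀ x, u x < m → deriv (deriv u) x < 0) (hx₀ : deriv u x₀ ≤ 0) :
    ¬u x₀ < m := by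
  intro hlt₀
  have hbelow : ∀ y, x₀ ≤ y → u y < m := by
    by_contra! ⟨y, hxy, hmy⟩
    obtain ⟨a, ⟨⟨hxa, hay⟩, hma⟩, hleast⟩ :=
      (isCompact_Icc.inter_right (isClosed_le continuous_const hu.continuous)).exists_isLeast
        ⟨y, ⟨hxy, le_rfl⟩, hmy⟩
    have hlt : ∀ z ∈ interior (Icc x₀ a), u z < m := by
      rw [interior_Icc]
      exact fun z hz => lt_of_not_ge fun h =>
        hz.2.not_ge (hleast ⟨⟨hz.1.le, hz.2.le.trans hay⟩, h⟩)
    have hu'_anti : AntitoneOn (deriv u) (Icc x₀ a) :=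
      antitoneOn_of_deriv_nonpos (convex_Icc _ _) hu'.continuous.continuousOn
        hu'.differentiableOn fun z hz => (hconc z (hlt z hz)).le
    have hu_anti : AntitoneOn u (Icc x₀ a) :=
      antitoneOn_of_deriv_nonpos (convex_Icc _ _) hu.continuous.continuousOn hu.differentiableOn
        fun z hz => (hu'_anti ⟨le_rfl, hxa⟩ (interior_subset hz)
          (interior_subset (s := Icc x₀ a) hz).1).trans hx₀
    linarith [hu_anti ⟨le_rfl, hxa⟩ ⟨hxa, le_rfl⟩ hxa, show m ≤ u a from hma]
  have hu'_anti : StrictAntiOn (deriv u) (Ici x₀) :=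
    strictAntiOn_of_deriv_neg (convex_Ici _) hu'.continuous.continuousOn fun z hz =>
      hconc z (hbelow z (interior_subset (s := Ici x₀) hz))
  have hslope : deriv u (x₀ + 1) < 0 :=
    (hu'_anti self_mem_Ici (by simp) (lt_add_one x₀)).trans_le hx₀
  obtain ⟨y, hy⟩ := exists_nonpos_of_deriv_le_neg hu hslope fun z hz =>
    (hu'_anti (by simp) (by simp; linarith) hz).le
  exact (hpos y).not_ge hy

lemma le_of_deriv2_neg_of_lt {u : ℝ → ℝ} {m : ℝ} (hu : Differentiable ℝ u)
    (hu' : Differentiable ℝ (deriv u)) (hpos : ∀ x, 0 < u x)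
    (hconc : ∀ x, u x < m → deriv (deriv u) x < 0) (x : ℝ) : m ≤ u x := by
  rcases le_total (deriv u x) 0 with hx | hx
  · exact not_lt.1 (not_lt_of_deriv_nonpos_of_deriv2_neg hu hu' hpos hconc hx)
  · have hderiv : deriv (fun y => u (-y)) = fun y => -deriv u (-y) :=
      funext (deriv_comp_neg u)
    have hderiv2 (y : ℝ) : deriv (deriv fun y => u (-y)) y = deriv (deriv u) (-y) := by
      rw [hderiv, deriv.fun_neg, deriv_comp_neg, neg_neg]
    have := not_lt_of_deriv_nonpos_of_deriv2_neg (u := fun y => u (-y)) (x₀ := -x)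
      (hu.comp differentiable_neg) (by rw [hderiv]; exact (hu'.comp differentiable_neg).neg)
      (fun y => hpos _) (fun y hy => by rw [hderiv2]; exact hconc _ hy)
      (by rw [deriv_comp_neg, neg_neg]; linarith)
    simpa using this

lemma IsBddPosSteadyState.le_of_forall_le_s17 {g u : ℝ → ℝ} {m : ℝ} (hu : IsBddPosSteadyState g u)
    (hg : ∀ x, m ≤ g x) (x : ℝ) : m ≤ u x := by
  obtain ⟨hC2, -, hpos, hode⟩ := hu
  have hC2' : ContDiff ℝ (1 + 1) u := hC2
  refine le_of_deriv2_neg_of_lt (hC2.differentiable (by norm_num))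
    ((contDiff_succ_iff_deriv.1 hC2').2.2.differentiable one_ne_zero) hpos (fun y hy => ?_) x
  have hneg : u y * (u y - g y) < 0 := mul_neg_of_pos_of_neg (hpos y) (by linarith [hg y])
  linarith [hode y]

lemma profile_sub_apply {u : ℝ → ℝ → ℝ} {h : ℝ → ℝ} (hh : Function.Injective h) (x t : ℝ) :
    profile u h (x - h t) (h t) = u x t := by
  rw [profile, sub_add_cancel, Function.leftInverse_invFun hh t]

theorem semi_wave_uniform_lower_bound_general (μ : ℝ)
    (g ustar : ℝ → ℝ)
    (hginf : ∃ m > (0 : ℝ), ∀ x : ℝ, m ≤ g x)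
    (hstar : IsBddPosSteadyState g ustar)
    (utld : ℝ → ℝ → ℝ) (htld : ℝ → ℝ)
    (hsw : IsAPSemiWave μ g ustar utld htld) :
    ∃ ε > (0 : ℝ), ∃ δ > (0 : ℝ), ∀ t : ℝ, ∀ x ≤ htld t - δ, ε ≤ utld x t := by
  obtain ⟨m, hm, hgm⟩ := hginf
  obtain ⟨X, hX⟩ := hsw.connects (m / 2) (half_pos hm)
  refine ⟨m / 2, half_pos hm, max 1 (-X), lt_max_of_lt_left one_pos, fun t x hx => ?_⟩
  have hclose := hX (x - htld t) (by linarith [le_max_right 1 (-X)]) (htld t)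
  rw [profile_sub_apply hsw.mono.injective, sub_add_cancel] at hclose
  linarith [(abs_lt.1 hclose).1, hstar.le_of_forall_le_s17 hgm x]

theorem semi_wave_uniform_lower_bound (μ : ℝ) (hμ : 0 < μ)
    (g ustar : ℝ → ℝ) (hg : BohrAlmostPeriodic g)
    (hginf : ∃ m > (0 : ℝ), ∀ x : ℝ, m ≤ g x)
    (hstar : IsBddPosSteadyState g ustar)
    (utld : ℝ → ℝ → ℝ) (htld : ℝ → ℝ)
    (hsw : IsAPSemiWave μ g ustar utld htld) :
    ∃ ε > (0 : ℝ), ∃ δ > (0 : ℝ), ∀ t : ℝ, ∀ x ≤ htld t - δ, ε ≤ utld x t :=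
  semi_wave_uniform_lower_bound_general μ g ustar hginf hstar utld htld hsw
end
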